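/- Let 𝒢 = {s_1, ..., s_{2^n}} be a generating set as above (so 𝒢 ∪ {0} is a maximum class of VC dimension 1, and the s_i are linearly independent over 𝔽_2 as functions). Let ℬ be the set of all XOR-sums of at most k distinct elements of 𝒢, viewed in {0,1}^{2^n}. Then ℬ is a maximum class of VC dimension k: |ℬ| = Σ_{i=0}^{k} binomial(2^n, i) and VC(ℬ) = k. -/

import Mathlib

open Finset

/-- A concept class `C` shatters a coordinate set `I` if every assignment of
values to the coordinates in `I` is realized by some concept in `C`. -/
def Shatters {α : Type*} (C : Finset (α → Bool)) (I : Finset α) : Prop :=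
  ∀ f : α → Bool, ∃ c ∈ C, ∀ i ∈ I, c i = f i

/-- The VC dimension of a concept class: the largest cardinality of a shattered
coordinate set. -/
noncomputable def vcDim {α : Type*} [Fintype α] [DecidableEq α]
    (C : Finset (α → Bool)) : ℕ :=
  letI := Classical.decPred (Shatters C)
  (Finset.univ.filter (Shatters C)).sup Finset.card

/-- The subcube with free coordinate set `S` and anchor `a`: all vectors that
agree with `a` outside `S`.  Its dimension is `S.card`. -/
def subcube {α : Type*} [Fintype α] [DecidableEq α] (S : Finset α) (a : α → Bool) :
    Finset (α → Bool) :=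
  Finset.univ.filter fun c => ∀ i ∉ S, c i = a i

/-!
Evaluated at the points `p m`, the generating set is unitriangular: `s i (p m) = [i = m]` for
`i ≤ m`. Hence `T ↦ ⊕_{i ∈ T} s i` is injective, because two such sums differ at `p d` for
`d = max (T ∆ T')`; this gives the cardinality, and applied to subsets of a `k`-set `J` it shows
that `p '' J` is shattered.

For the upper bound, let `⊕_T s` agree with `⊕_J s` on `p '' J`; we show `#J ≤ #T`. The
maximum `d` of `T ∆ J` lies in `T \ J`, since the two sums differ at `p d`. The indicator of
`p d` is `s 0` (if `d = 0`) or `s j ⊕ s d` with `j < d`, i.e. `⊕_U s` with `d ∈ U`, `#U ≤ 2`,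
`U ≤ d`. Replacing `T` by `T ∆ U` keeps the values on `p '' J`, does not increase `#T`, and lowers
the maximum of the symmetric difference with `J`.
-/

open scoped symmDiff

lemma Finset.card_symmDiff_add_two_mul_card_inter {β : Type*} [DecidableEq β] (A B : Finset β) :
    #(A ∆ B) + 2 * #(A ∩ B) = #A + #B := by
  rw [symmDiff_eq_sup_sdiff_inf, sup_eq_union, inf_eq_inter,
    card_sdiff_of_subset inter_subset_union]
  have := card_union_add_card_inter A B
  have := card_le_card (inter_subset_union (s := A) (t := B))
  omega

lemma Finset.card_filter_card_le {β : Type*} [Fintype β] (k : ℕ) :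
    #((univ : Finset (Finset β)).filter fun T => #T ≤ k) =
      ∑ i ∈ range (k + 1), (Fintype.card β).choose i := by
  rw [card_eq_sum_card_fiberwise (f := card) (t := range (k + 1))
    (fun T hT => by simpa [Nat.lt_succ_iff] using hT)]
  refine sum_congr rfl fun i hi => ?_
  rw [← card_univ, ← card_powersetCard, powersetCard_eq_filter, filter_filter, powerset_univ]
  congr 1
  ext T
  simp only [mem_filter, mem_univ, true_and]
  exact ⟨And.right, fun h => ⟨h ▸ Nat.lt_succ_iff.1 (mem_range.1 hi), h⟩⟩

section XorSum

variable {ι α : Type*}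

def xorSum (s : ι → α → Bool) (T : Finset ι) (x : α) : Bool :=
  decide ((T.filter fun i => s i x = true).card % 2 = 1)

variable {s : ι → α → Bool}

@[simp] lemma xorSum_singleton (i : ι) (x : α) : xorSum s {i} x = s i x := by
  cases h : s i x <;> simp [xorSum, filter_singleton, h]

lemma xorSum_symmDiff [DecidableEq ι] (T U : Finset ι) (x : α) :
    xorSum s (T ∆ U) x = xor (xorSum s T x) (xorSum s U x) := by
  have hfilter : (T ∆ U).filter (fun i => s i x = true) =
      T.filter (fun i => s i x = true) ∆ U.filter (fun i => s i x = true) := by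
    ext i; simp only [mem_filter, mem_symmDiff]; tauto
  have hcard := card_symmDiff_add_two_mul_card_inter
    (T.filter fun i => s i x = true) (U.filter fun i => s i x = true)
  unfold xorSum
  rw [hfilter]
  rcases Nat.mod_two_eq_zero_or_one (T.filter fun i => s i x = true).card with h | h <;>
  rcases Nat.mod_two_eq_zero_or_one (U.filter fun i => s i x = true).card with h' | h' <;>
  simp only [h, h'] <;> simp <;> omega

lemma xorSum_insert [DecidableEq ι] {i : ι} {T : Finset ι} (hi : i ∉ T) (x : α) :
    xorSum s (insert i T) x = xor (s i x) (xorSum s T x) := by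
  rw [insert_eq, ← sup_eq_union, ← (disjoint_singleton_left.2 hi).symmDiff_eq_sup,
    xorSum_symmDiff, xorSum_singleton]

end XorSum

section Triangular

variable {ι α : Type*} [LinearOrder ι] {s : ι → α → Bool} {p : ι → α}

lemma xorSum_apply_max'_symmDiff_ne (hlead : ∀ i m, i ≤ m → s i (p m) = decide (i = m))
    {T T' : Finset ι} (h : (T ∆ T').Nonempty) :
    xorSum s T (p ((T ∆ T').max' h)) ≠ xorSum s T' (p ((T ∆ T').max' h)) := by
  set d := (T ∆ T').max' h
  have hfilter : (T ∆ T').filter (fun i => s i (p d) = true) = {d} := by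
    rw [filter_congr fun i hi => by rw [hlead i d (le_max' _ i hi), decide_eq_true_iff],
      filter_eq', if_pos (max'_mem _ h)]
  have hone : xorSum s (T ∆ T') (p d) = true := by simp [xorSum, hfilter]
  rw [xorSum_symmDiff] at hone
  intro heq
  simp [heq] at hone

lemma xorSum_injective (hlead : ∀ i m, i ≤ m → s i (p m) = decide (i = m)) :
    Function.Injective (xorSum s) := by
  intro T T' hTT'
  by_contra hne
  exact xorSum_apply_max'_symmDiff_ne hlead (symmDiff_nonempty.2 hne) (congrFun hTT' _)

lemma card_le_card_of_xorSum_eq_on [WellFoundedLT ι]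
    (hlead : ∀ i m, i ≤ m → s i (p m) = decide (i = m))
    (hunit : ∀ d, ∃ U : Finset ι, d ∈ U ∧ #U ≤ 2 ∧ (∀ u ∈ U, u ≤ d) ∧
      ∀ m, xorSum s U (p m) = decide (m = d))
    (J T : Finset ι) (hagree : ∀ m ∈ J, xorSum s T (p m) = xorSum s J (p m)) : #J ≤ #T := by
  induction T using (wellFounded_lt.onFun (f := fun T : Finset ι => (T ∆ J).max)).induction with
  | _ T ih =>
    rcases (T ∆ J).eq_empty_or_nonempty with hD | hD
    · rw [symmDiff_eq_bot.1 hD]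
    set d := (T ∆ J).max' hD
    have hdJ : d ∉ J := fun hdJ => xorSum_apply_max'_symmDiff_ne hlead hD (hagree d hdJ)
    have hdT : d ∈ T := ((mem_symmDiff.1 (max'_mem _ hD)).resolve_right fun h => hdJ h.1).1
    obtain ⟨U, hdU, hU, hUd, hUval⟩ := hunit d
    have hcard : #(T ∆ U) ≤ #T := by
      have := card_symmDiff_add_two_mul_card_inter T U
      have := card_pos.2 ⟨d, mem_inter.2 ⟨hdT, hdU⟩⟩
      omega
    have hlt : ((T ∆ U) ∆ J).max < (T ∆ J).max := by
      rw [← coe_max' hD, max_eq_sup_coe, Finset.sup_lt_iff (WithBot.bot_lt_coe d),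
        symmDiff_right_comm]
      intro x hx
      rw [WithBot.coe_lt_coe]
      rcases mem_symmDiff.1 hx with ⟨hxD, hxU⟩ | ⟨hxU, hxD⟩
      · exact lt_of_le_of_ne (le_max' _ x hxD) (by rintro rfl; exact hxU hdU)
      · exact lt_of_le_of_ne (hUd x hxU) (by rintro rfl; exact hxD (max'_mem _ hD))
    refine (ih _ hlt fun m hm => ?_).trans hcard
    rw [xorSum_symmDiff, hUval, hagree m hm, decide_eq_false (ne_of_mem_of_not_mem hm hdJ),
      Bool.xor_false]

end Triangular

section GeneratingSet

variable {N : ℕ} [NeZero N] {α : Type*} [DecidableEq α] {s : Fin N → α → Bool} {p : Fin N → α}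

lemma apply_eq_decide_of_le (hp : Function.Injective p) (hbase : s 0 = fun x => decide (x = p 0))
    (hstep : ∀ i : Fin N, 0 < (i : ℕ) → ∃ j : Fin N, (j : ℕ) < (i : ℕ) ∧
      s i = fun x => xor (s j x) (decide (x = p i))) :
    ∀ i m, i ≤ m → s i (p m) = decide (i = m) := by
  intro i
  induction i using WellFoundedLT.induction with
  | _ i ih =>
    intro m him
    rcases Nat.eq_zero_or_pos (i : ℕ) with hi | hi
    · obtain rfl : i = 0 := Fin.ext hi
      rw [hbase]
      simp [hp.eq_iff, eq_comm]
    · obtain ⟨j, hji, hsi⟩ := hstep i hi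
      have hjm : j < m := lt_of_lt_of_le hji him
      simp [hsi, ih j hji m hjm.le, hjm.ne, hp.eq_iff, eq_comm]

lemma exists_xorSum_eq_indicator (hp : Function.Injective p)
    (hbase : s 0 = fun x => decide (x = p 0))
    (hstep : ∀ i : Fin N, 0 < (i : ℕ) → ∃ j : Fin N, (j : ℕ) < (i : ℕ) ∧
      s i = fun x => xor (s j x) (decide (x = p i))) (d : Fin N) :
    ∃ U : Finset (Fin N), d ∈ U ∧ #U ≤ 2 ∧ (∀ u ∈ U, u ≤ d) ∧
      ∀ m, xorSum s U (p m) = decide (m = d) := by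
  rcases Nat.eq_zero_or_pos (d : ℕ) with hd | hd
  · refine ⟨{d}, mem_singleton_self d, by simp, by simp, fun m => ?_⟩
    obtain rfl : d = 0 := Fin.ext hd
    rw [xorSum_singleton, hbase]
    simp [hp.eq_iff]
  · obtain ⟨j, hjd, hsd⟩ := hstep d hd
    have hjd' : j ≠ d := Fin.ne_of_lt hjd
    refine ⟨{j, d}, by simp, card_le_two, by simp [(Fin.lt_def.2 hjd).le], fun m => ?_⟩
    rw [xorSum_insert (by simpa using hjd'), xorSum_singleton, hsd]
    simp [hp.eq_iff]

end GeneratingSet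

lemma vcDim_eq_of_shatters {α : Type*} [Fintype α] [DecidableEq α] {C : Finset (α → Bool)}
    {k : ℕ} (hle : ∀ I, Shatters C I → #I ≤ k) {I : Finset α} (hI : Shatters C I) (hIk : #I = k) :
    vcDim C = k := by
  classical
  unfold _root_.vcDim
  refine le_antisymm (Finset.sup_le fun J hJ => hle J (mem_filter.1 hJ).2) ?_
  exact hIk ▸ le_sup (f := card) (mem_filter.2 ⟨mem_univ I, hI⟩)

section SumsUpTo

variable {ι α : Type*} [Fintype ι] [Fintype α]

/-- The class `ℬ` of the paper. -/
def sumsUpTo (s : ι → α → Bool) (k : ℕ) : Finset (α → Bool) :=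
  (univ.filter fun T : Finset ι => #T ≤ k).image (xorSum s)

variable {s : ι → α → Bool} {k : ℕ}

lemma mem_sumsUpTo {g : α → Bool} :
    g ∈ sumsUpTo s k ↔ ∃ T : Finset ι, #T ≤ k ∧ xorSum s T = g := by
  simp [sumsUpTo]

lemma sumsUpTo_eq_filter [DecidableEq α] (s : ι → α → Bool) (k : ℕ) :
    sumsUpTo s k = univ.filter (fun g => ∃ T : Finset ι, #T ≤ k ∧
      ∀ x, (g x = true ↔ (T.filter (fun i => s i x = true)).card % 2 = 1)) := by
  ext g
  simp only [mem_sumsUpTo, mem_filter, mem_univ, true_and, funext_iff, xorSum]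
  refine exists_congr fun T => and_congr_right fun _ => forall_congr' fun x => ?_
  rw [eq_comm, Bool.eq_iff_iff, decide_eq_true_iff]

variable [LinearOrder ι]

lemma card_sumsUpTo {p : ι → α} (hlead : ∀ i m, i ≤ m → s i (p m) = decide (i = m)) :
    #(sumsUpTo s k) = ∑ i ∈ range (k + 1), (Fintype.card ι).choose i := by
  rw [sumsUpTo, card_image_of_injective _ (xorSum_injective hlead), card_filter_card_le]

lemma shatters_sumsUpTo_image [DecidableEq α] {p : ι → α}
    (hlead : ∀ i m, i ≤ m → s i (p m) = decide (i = m)) {J : Finset ι} (hJ : #J ≤ k) :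
    Shatters (sumsUpTo s k) (J.image p) := by
  intro f
  obtain ⟨T, hTJ, hT⟩ := surj_on_of_inj_on_of_card_le
    (s := J.powerset) (t := (univ : Finset (J → Bool)))
    (fun T _ m => xorSum s T (p m)) (fun _ _ => mem_univ _)
    (fun T T' hT hT' hTT' => by
      by_contra hne
      have hD := symmDiff_nonempty.2 hne
      have hdJ : (T ∆ T').max' hD ∈ J := union_subset (mem_powerset.1 hT) (mem_powerset.1 hT')
        (symmDiff_subset_union (max'_mem _ hD))
      exact xorSum_apply_max'_symmDiff_ne hlead hD (congrFun hTT' ⟨_, hdJ⟩))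
    (by simp)
    (fun m => f (p m)) (mem_univ _)
  refine ⟨xorSum s T, mem_sumsUpTo.2 ⟨T, (card_le_card (mem_powerset.1 hTJ)).trans hJ, rfl⟩, ?_⟩
  simp only [mem_image, forall_exists_index, and_imp]
  rintro _ m hm rfl
  exact (congrFun hT ⟨m, hm⟩).symm

lemma card_le_of_shatters_sumsUpTo [WellFoundedLT ι] [DecidableEq α] {p : ι ≃ α}
    (hlead : ∀ i m, i ≤ m → s i (p m) = decide (i = m))
    (hunit : ∀ d, ∃ U : Finset ι, d ∈ U ∧ #U ≤ 2 ∧ (∀ u ∈ U, u ≤ d) ∧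
      ∀ m, xorSum s U (p m) = decide (m = d))
    {I : Finset α} (hI : Shatters (sumsUpTo s k) I) : #I ≤ k := by
  set J := I.map p.symm.toEmbedding
  obtain ⟨g, hg, hgJ⟩ := hI (xorSum s J)
  obtain ⟨T, hTk, rfl⟩ := mem_sumsUpTo.1 hg
  have hTJ : ∀ m ∈ J, xorSum s T (p m) = xorSum s J (p m) := fun m hm => by
    simpa using hgJ (p m) (by simpa [J] using hm)
  calc #I = #J := (card_map _).symm
    _ ≤ #T := card_le_card_of_xorSum_eq_on hlead hunit J T hTJ
    _ ≤ k := hTk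

end SumsUpTo

/-- Let `s` be a generating set as before.  The class `ℬ` of all XOR-sums of at
most `k` distinct elements of the generating set (a function `g` belongs to `ℬ`
iff for some index set `T` of size at most `k`, `g x` is the parity of
`#{i ∈ T : s i x = true}` for every `x`) is a maximum class of VC dimension `k`
in the binary `2^n`-cube. -/
theorem sums_of_generating_set_maximum (n k : ℕ) (hk : k ≤ 2 ^ n)
    (s : Fin (2 ^ n) → ((Fin n → Bool) → Bool))
    (p : Fin (2 ^ n) ≃ (Fin n → Bool))
    (hbase : s 0 = fun x => decide (x = p 0))
    (hstep : ∀ i : Fin (2 ^ n), 0 < (i : ℕ) → ∃ j : Fin (2 ^ n), (j : ℕ) < (i : ℕ) ∧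
      s i = fun x => xor (s j x) (decide (x = p i))) :
    ((Finset.univ : Finset ((Fin n → Bool) → Bool)).filter
        (fun g => ∃ T : Finset (Fin (2 ^ n)), T.card ≤ k ∧
          ∀ x, (g x = true ↔ (T.filter (fun i => s i x = true)).card % 2 = 1))).card
      = ∑ i ∈ Finset.range (k + 1), (2 ^ n).choose i ∧
    vcDim ((Finset.univ : Finset ((Fin n → Bool) → Bool)).filter
        (fun g => ∃ T : Finset (Fin (2 ^ n)), T.card ≤ k ∧
          ∀ x, (g x = true ↔ (T.filter (fun i => s i x = true)).card % 2 = 1)))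
      = k := by
  have hlead := apply_eq_decide_of_le p.injective hbase hstep
  have hunit := exists_xorSum_eq_indicator p.injective hbase hstep
  rw [← sumsUpTo_eq_filter]
  refine ⟨by rw [card_sumsUpTo hlead, Fintype.card_fin], ?_⟩
  obtain ⟨J, -, hJ⟩ := exists_subset_card_eq (s := (univ : Finset (Fin (2 ^ n)))) (by simpa)
  exact vcDim_eq_of_shatters (fun I hI => card_le_of_shatters_sumsUpTo hlead hunit hI)
    (shatters_sumsUpTo_image hlead hJ.le) (by rw [card_image_of_injective _ p.injective, hJ])
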